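/- arXiv:2402.04190 — 2 statements merged into one kernel-verified Lean document; each statement's English description precedes it below -/
import Mathlib

section
/- The function F defined on the open interval (0,1) by F(a) = (a / √(1 − a²)) · artanh(√(1 − a²)), where artanh denotes the inverse hyperbolic tangent, is strictly increasing on (0,1). -/
/-!
With `u = artanh √(1 - a²)`, i.e. `a = sech u`, one has `F a = u / sinh u`. Since `tanh u < u` for
`u > 0`, the map `u ↦ u / sinh u` is strictly decreasing on `(0, ∞)`, while `u` is strictly
decreasing in `a ∈ (0, 1)`.
-/

/-- The inverse hyperbolic tangent. -/
noncomputable def artanh (x : ℝ) : ℝ := (1 / 2) * Real.log ((1 + x) / (1 - x))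

/-- `F(a) = (a / √(1 - a²)) · artanh (√(1 - a²))`. -/
noncomputable def F (a : ℝ) : ℝ :=
  (a / Real.sqrt (1 - a ^ 2)) * artanh (Real.sqrt (1 - a ^ 2))

open Set

namespace Real

theorem sinh_lt_mul_cosh {x : ℝ} (hx : 0 < x) : sinh x < x * cosh x := by
  have hmono : StrictMonoOn (fun y ↦ y * cosh y - sinh y) (Ici 0) := by
    refine strictMonoOn_of_deriv_pos (convex_Ici 0) (by fun_prop) fun y hy ↦ ?_
    rw [interior_Ici, mem_Ioi] at hy
    have hderiv : HasDerivAt (fun y ↦ y * cosh y - sinh y) (1 * cosh y + y * sinh y - cosh y) y :=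
      ((hasDerivAt_id y).mul (hasDerivAt_cosh y)).sub (hasDerivAt_sinh y)
    rw [hderiv.deriv]
    nlinarith [sinh_pos_iff.2 hy]
  simpa using hmono self_mem_Ici hx.le hx

theorem strictAntiOn_div_sinh : StrictAntiOn (fun x ↦ x / sinh x) (Ioi 0) := by
  refine strictAntiOn_of_deriv_neg (convex_Ioi 0)
    (continuousOn_id.div continuous_sinh.continuousOn fun x hx ↦ (sinh_pos_iff.2 hx).ne')
    fun x hx ↦ ?_
  rw [interior_Ioi, mem_Ioi] at hx
  have hsinh := sinh_pos_iff.2 hx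
  have hderiv : HasDerivAt (fun x ↦ x / sinh x) ((1 * sinh x - x * cosh x) / sinh x ^ 2) x :=
    (hasDerivAt_id x).div (hasDerivAt_sinh x) hsinh.ne'
  rw [hderiv.deriv]
  exact div_neg_of_neg_of_pos (by linarith [sinh_lt_mul_cosh hx]) (by positivity)

end Real

theorem artanh_eq_real_artanh {x : ℝ} (hx : x ∈ Icc (-1) 1) : artanh x = Real.artanh x :=
  (Real.artanh_eq_half_log hx).symm

theorem sqrt_one_sub_sq_mem_Ioo {a : ℝ} (ha : a ∈ Ioo 0 1) : √(1 - a ^ 2) ∈ Ioo 0 1 := by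
  obtain ⟨ha0, ha1⟩ := ha
  exact ⟨Real.sqrt_pos.2 (by nlinarith), (Real.sqrt_lt' one_pos).2 (by nlinarith)⟩

theorem strictAntiOn_sqrt_one_sub_sq : StrictAntiOn (fun a : ℝ ↦ √(1 - a ^ 2)) (Icc 0 1) :=
  fun a ha b hb hab ↦ Real.sqrt_lt_sqrt (by nlinarith [hb.1, hb.2]) (by nlinarith [ha.1])

theorem F_eq_div_sinh {a : ℝ} (ha : a ∈ Ioo 0 1) :
    F a = Real.artanh √(1 - a ^ 2) / Real.sinh (Real.artanh √(1 - a ^ 2)) := by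
  have he : √(1 - a ^ 2) ∈ Ioo (-1) 1 :=
    Ioo_subset_Ioo_left (by norm_num) (sqrt_one_sub_sq_mem_Ioo ha)
  have hsq : √(1 - √(1 - a ^ 2) ^ 2) = a := by
    rw [Real.sq_sqrt (by nlinarith [ha.1, ha.2]), sub_sub_cancel, Real.sqrt_sq ha.1.le]
  rw [F, artanh_eq_real_artanh (Ioo_subset_Icc_self he), Real.sinh_artanh he, hsq,
    div_div_eq_mul_div, mul_comm, mul_div_assoc]

/-- `F` is strictly increasing on the open interval `(0,1)`. -/
theorem F_strictMonoOn : StrictMonoOn F (Set.Ioo (0 : ℝ) 1) := by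
  intro a ha b hb hab
  have hea := sqrt_one_sub_sq_mem_Ioo ha
  have heb := sqrt_one_sub_sq_mem_Ioo hb
  have hlt : √(1 - b ^ 2) < √(1 - a ^ 2) :=
    strictAntiOn_sqrt_one_sub_sq (Ioo_subset_Icc_self ha) (Ioo_subset_Icc_self hb) hab
  have hartanh : Real.artanh √(1 - b ^ 2) < Real.artanh √(1 - a ^ 2) :=
    Real.artanh_lt_artanh (by linarith [heb.1]) hea.2 hlt
  rw [F_eq_div_sinh ha, F_eq_div_sinh hb]
  exact Real.strictAntiOn_div_sinh (Real.artanh_pos heb) (Real.artanh_pos hea) hartanh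
end

section
/- For a ∈ (0,1) let e(a) = √(1 − a²) and let σ(a) = √( e(a) / ( e(a) + a·artanh(e(a)) ) ), where artanh denotes the inverse hyperbolic tangent. Then for every a ∈ (0,1) one has 1/√2 < σ(a) < 1; that is, the softness of every oblate spheroid in the family with semi-axes (a,1,1), 0 < a < 1, lies strictly between the softness 1/√2 of the sphere and the softness 1 of the two-sided circular disc. -/
/-- `e a = √(1 - a²)`, the eccentricity of the oblate spheroid with semi-axes `(a,1,1)`. -/
noncomputable def ecc (a : ℝ) : ℝ := Real.sqrt (1 - a ^ 2)

/-- The softness `σ(a) = √( e/(e + a·artanh e) )` of the oblate spheroid with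
semi-axes `(a,1,1)`, where `e = √(1 - a²)`. -/
noncomputable def softness (a : ℝ) : ℝ :=
  Real.sqrt (ecc a / (ecc a + a * artanh (ecc a)))

/-!
Put `e = ecc a` and `t = artanh e`, so that `a = √(1 - e²) = 1 / cosh t` and `e = tanh t`.
Then `a · t = t / cosh t < sinh t / cosh t = e`, and `σ(a)² = e / (e + a t)` lies strictly
between `1/2` and `1` because `0 < a t < e`.
-/

open Set

theorem artanh_pos {x : ℝ} (hx : x ∈ Ioo 0 1) : 0 < artanh x := by
  rw [artanh_eq_real_artanh ⟨by linarith [hx.1], hx.2.le⟩]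
  exact Real.artanh_pos hx

theorem Real.sqrt_one_sub_sq_mul_artanh_lt {x : ℝ} (hx : x ∈ Ioo 0 1) :
    √(1 - x ^ 2) * Real.artanh x < x := by
  have hx' : x ∈ Ioo (-1) 1 := ⟨by linarith [hx.1], hx.2⟩
  have hpos : 0 < √(1 - x ^ 2) := Real.sqrt_pos.2 (by nlinarith [hx.1, hx.2])
  calc √(1 - x ^ 2) * Real.artanh x
      < √(1 - x ^ 2) * Real.sinh (Real.artanh x) :=
        mul_lt_mul_of_pos_left (Real.self_lt_sinh_iff.2 (Real.artanh_pos hx)) hpos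
    _ = x := by rw [Real.sinh_artanh hx']; field_simp

theorem ecc_mem_Ioo {a : ℝ} (ha : a ∈ Ioo 0 1) : ecc a ∈ Ioo 0 1 := by
  obtain ⟨ha0, ha1⟩ := ha
  exact ⟨Real.sqrt_pos.2 (by nlinarith), (Real.sqrt_lt' one_pos).2 (by nlinarith)⟩

theorem sqrt_one_sub_ecc_sq {a : ℝ} (ha : a ∈ Icc 0 1) : √(1 - ecc a ^ 2) = a := by
  obtain ⟨ha0, ha1⟩ := ha
  rw [ecc, Real.sq_sqrt (by nlinarith), sub_sub_cancel, Real.sqrt_sq ha0]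

theorem mul_artanh_ecc_lt_ecc {a : ℝ} (ha : a ∈ Ioo 0 1) : a * artanh (ecc a) < ecc a := by
  have he := ecc_mem_Ioo ha
  rw [artanh_eq_real_artanh ⟨by linarith [he.1], he.2.le⟩]
  have h := Real.sqrt_one_sub_sq_mul_artanh_lt he
  rwa [sqrt_one_sub_ecc_sq (Ioo_subset_Icc_self ha)] at h

theorem sqrt_div_add_mem_Ioo {e x : ℝ} (hx : 0 < x) (hxe : x < e) :
    √(e / (e + x)) ∈ Ioo (1 / √2) 1 := by
  have hsum : 0 < e + x := by linarith
  constructor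
  · rw [one_div, ← Real.sqrt_inv]
    exact Real.sqrt_lt_sqrt (by norm_num) (by rw [lt_div_iff₀ hsum]; linarith)
  · exact (Real.sqrt_lt' one_pos).2 (by rw [one_pow, div_lt_one hsum]; linarith)

/-- for every a ∈ (0,1) the softness satisfies 1/√2 < σ(a) < 1. -/
theorem softness_mem_Ioo :
    ∀ a ∈ Set.Ioo (0 : ℝ) 1, 1 / Real.sqrt 2 < softness a ∧ softness a < 1 := fun _ ha =>
  sqrt_div_add_mem_Ioo (mul_pos ha.1 (artanh_pos (ecc_mem_Ioo ha))) (mul_artanh_ecc_lt_ecc ha)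
end
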